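/- The minimum degree bound n/8 is not sufficient to force pc(G) = 2 for connected bipartite graphs: for n divisible by 8 (n ≥ 16), let G1, G2, G3, G4 be disjoint complete bipartite graphs K_{n/8,n/8}, pick v_i ∈ G_i, and join v1 to v2, v3, v4 by edges. The resulting graph G is a connected bipartite graph on n vertices with δ(G) = n/8 and pc(G) = 3. -/

import Mathlib

/-!
Write `gate a₀ j = (j, inl a₀)` for the paper's `v_j`, so that `v_1 = gate a₀ 0` is the hub.
The hub is a cut vertex, and the only edge leaving a block `j ≠ 0` is the bridge from its
gate to the hub. Hence a path between two of the gates `1, 2, 3` consists of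
exactly the two bridges, which must receive different colours; with only two colours two of the
three bridges agree, so `pc ≥ 3`.

Conversely, colour a perfect matching of each `K_{m,m}` with `1`, its other edges with `0`, and
the three bridges with three distinct colours. For `m ≥ 2`, every vertex of `K_{m,m}` reaches a
fixed vertex by a proper path whose last colour avoids any prescribed colour; so every vertex
reaches the hub by a proper path inside its own block plus bridge, and two such paths from
different blocks glue at the hub into a proper path.
-/

open SimpleGraph

variable {V : Type*}

/-- A walk is proper w.r.t. an edge-coloring if consecutive edges get distinct colors. -/
def IsProperWalk {α : Type*} {G : SimpleGraph V} (c : Sym2 V → α) {u v : V} (p : G.Walk u v) : Prop :=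
  p.edges.Chain' (fun e f => c e ≠ c f)

/-- An edge-coloring is a proper-path coloring if every pair of vertices is joined by a proper path. -/
def IsProperConnColoring {α : Type*} (G : SimpleGraph V) (c : Sym2 V → α) : Prop :=
  ∀ u v : V, ∃ p : G.Walk u v, p.IsPath ∧ IsProperWalk c p

/-- The proper connection number. -/
noncomputable def pc (G : SimpleGraph V) : ℕ :=
  sInf {k | ∃ c : Sym2 V → Fin k, IsProperConnColoring G c}

/-- Strong property of an edge-coloring. -/
def HasStrongProp {α : Type*} (G : SimpleGraph V) (c : Sym2 V → α) : Prop :=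
  IsProperConnColoring G c ∧
  ∀ u v : V, u ≠ v → ∃ p₁ p₂ : G.Walk u v, p₁.IsPath ∧ p₂.IsPath ∧
    IsProperWalk c p₁ ∧ IsProperWalk c p₂ ∧
    p₁.edges.head?.map c ≠ p₂.edges.head?.map c ∧
    p₁.edges.getLast?.map c ≠ p₂.edges.getLast?.map c

/-- k-connectedness. -/
def KConnected (k : ℕ) (G : SimpleGraph V) [Fintype V] : Prop :=
  k < Fintype.card V ∧ ∀ S : Finset V, S.card < k → (G.induce ((↑S : Set V)ᶜ)).Connected

/-- edge chromatic number -/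
noncomputable def edgeChromatic (G : SimpleGraph V) : ℕ :=
  sInf {k | ∃ c : Sym2 V → Fin k, ∀ e ∈ G.edgeSet, ∀ f ∈ G.edgeSet, e ≠ f →
    (∃ x, x ∈ e ∧ x ∈ f) → c e ≠ c f}

/-- rainbow connection number -/
noncomputable def rc (G : SimpleGraph V) : ℕ :=
  sInf {k | ∃ c : Sym2 V → Fin k, ∀ u v : V, ∃ p : G.Walk u v, p.IsPath ∧ (p.edges.map c).Nodup}

theorem isProperWalk_iff_isChain {W α : Type*} {G : SimpleGraph W} {c : Sym2 W → α} {u v : W}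
    {p : G.Walk u v} : IsProperWalk c p ↔ p.edges.IsChain (fun e f => c e ≠ c f) := Iff.rfl

namespace IsProperWalk

variable {W α : Type*} {G : SimpleGraph W} {c : Sym2 W → α}

theorem nil {u : W} : IsProperWalk c (Walk.nil : G.Walk u u) := List.isChain_nil

theorem append {u v w : W} {p : G.Walk u v} {q : G.Walk v w} (hp : IsProperWalk c p)
    (hq : IsProperWalk c q) (h : ∀ e ∈ p.edges.getLast?, ∀ f ∈ q.edges.head?, c e ≠ c f) :
    IsProperWalk c (p.append q) := by
  rw [IsProperWalk, Walk.edges_append]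
  exact List.isChain_append.2 ⟨hp, hq, h⟩

theorem reverse {u v : W} {p : G.Walk u v} (hp : IsProperWalk c p) :
    IsProperWalk c p.reverse := by
  rw [IsProperWalk, Walk.edges_reverse]
  exact List.isChain_reverse.2 (hp.imp fun _ _ h => h.symm)

end IsProperWalk

theorem isProperWalk_map_iff {W W' α : Type*} {G : SimpleGraph W} {G' : SimpleGraph W'}
    (f : G →g G') {c : Sym2 W' → α} {u v : W} (p : G.Walk u v) :
    IsProperWalk c (p.map f) ↔ IsProperWalk (c ∘ Sym2.map f) p := by
  rw [IsProperWalk, IsProperWalk, Walk.edges_map]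
  exact List.isChain_map _

theorem IsProperConnColoring.connected {W α : Type*} [Nonempty W] {G : SimpleGraph W}
    {c : Sym2 W → α} (hc : IsProperConnColoring G c) : G.Connected :=
  (connected_iff _).2 ⟨fun u v => let ⟨p, _⟩ := hc u v; ⟨p⟩, inferInstance⟩

theorem exists_isPath_isProperWalk_of_meet {W α : Type*} {G : SimpleGraph W} {c : Sym2 W → α}
    {x y v : W} {p : G.Walk x v} {q : G.Walk y v} (hp : p.IsPath) (hq : q.IsPath)
    (hpc : IsProperWalk c p) (hqc : IsProperWalk c q)
    (hmeet : ∀ z ∈ p.support, z ∈ q.support → z = v)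
    (hlast : ∀ e ∈ p.edges.getLast?, ∀ f ∈ q.edges.getLast?, c e ≠ c f) :
    ∃ r : G.Walk x y, r.IsPath ∧ IsProperWalk c r := by
  refine ⟨p.append q.reverse, ?_, hpc.append hqc.reverse ?_⟩
  · have hq' := hq.reverse.support_nodup
    rw [Walk.isPath_def, Walk.support_append]
    refine hp.support_nodup.append (hq'.sublist (List.tail_sublist _)) fun z hzp hzq => ?_
    rw [← Walk.cons_tail_support, List.nodup_cons] at hq'
    obtain rfl := hmeet z hzp (by simpa using List.mem_of_mem_tail hzq)
    exact hq'.1 (by simpa using hzq)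
  · simpa [Walk.edges_reverse, List.head?_reverse] using hlast

section MatchingColor

variable {α : Type*} [DecidableEq α]

/-- Colour `1` exactly on the perfect matching `{inl a, inr a}` of `K_{α,α}`. -/
def matchingColor : Sym2 (α ⊕ α) → Fin 3 :=
  Sym2.lift ⟨fun s t => if s.swap = t then 1 else 0, fun s t => by
    refine if_congr ⟨?_, ?_⟩ rfl rfl <;> rintro rfl <;> exact Sum.swap_swap _⟩

@[simp] theorem matchingColor_mk (s t : α ⊕ α) :
    matchingColor s(s, t) = if s.swap = t then 1 else 0 := rfl

theorem isProperConnColoring_matchingColor :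
    IsProperConnColoring (completeBipartiteGraph α α) matchingColor := by
  rintro (a | a) (b | b)
  · by_cases hab : a = b
    · subst hab; exact ⟨.nil, by simp, IsProperWalk.nil⟩
    · refine ⟨.cons (v := .inr a) (by simp) (.cons (by simp) .nil), ?_, ?_⟩ <;>
        simp [isProperWalk_iff_isChain, Walk.isPath_def, hab]
  · exact ⟨.cons (by simp) .nil, by simp, by simp [isProperWalk_iff_isChain]⟩
  · exact ⟨.cons (by simp) .nil, by simp, by simp [isProperWalk_iff_isChain]⟩
  · by_cases hab : a = b
    · subst hab; exact ⟨.nil, by simp, IsProperWalk.nil⟩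
    · refine ⟨.cons (v := .inl a) (by simp) (.cons (by simp) .nil), ?_, ?_⟩ <;>
        simp [isProperWalk_iff_isChain, Walk.isPath_def, hab]

theorem exists_isPath_to_inl_lastColor_ne [Nontrivial α] (a₀ : α) (x : α ⊕ α) (t : Fin 3) :
    ∃ p : (completeBipartiteGraph α α).Walk x (.inl a₀), p.IsPath ∧
      IsProperWalk matchingColor p ∧ ∀ e ∈ p.edges.getLast?, matchingColor e ≠ t := by
  obtain ⟨a₁, ha₁⟩ := exists_ne a₀
  rcases x with a | b
  · by_cases ha : a = a₀
    · subst ha; exact ⟨.nil, by simp, IsProperWalk.nil, by simp⟩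
    by_cases ht : t = 1
    · refine ⟨.cons (v := .inr a) (by simp) (.cons (by simp) .nil), ?_, ?_, ?_⟩ <;>
        simp [isProperWalk_iff_isChain, Walk.isPath_def, ha, ht]
    · refine ⟨.cons (v := .inr a₀) (by simp) (.cons (by simp) .nil), ?_, ?_, ?_⟩ <;>
        simp [isProperWalk_iff_isChain, Walk.isPath_def, ha, Ne.symm ht]
  · by_cases hb : b = a₀
    · subst hb
      by_cases ht : t = 1
      · refine ⟨.cons (v := .inl a₁) (by simp) (.cons (v := .inr a₁) (by simp)
          (.cons (by simp) .nil)), ?_, ?_, ?_⟩ <;>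
          simp [isProperWalk_iff_isChain, Walk.isPath_def, ha₁, Ne.symm ha₁, ht]
      · refine ⟨.cons (by simp) .nil, ?_, ?_, ?_⟩ <;>
          simp [isProperWalk_iff_isChain, Walk.isPath_def, Ne.symm ht]
    · by_cases ht : t = 0
      · refine ⟨.cons (v := .inl b) (by simp) (.cons (v := .inr a₀) (by simp)
          (.cons (by simp) .nil)), ?_, ?_, ?_⟩ <;>
          simp [isProperWalk_iff_isChain, Walk.isPath_def, hb, ht]
      · refine ⟨.cons (by simp) .nil, ?_, ?_, ?_⟩ <;>
          simp [isProperWalk_iff_isChain, Walk.isPath_def, hb, Ne.symm ht]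

end MatchingColor

namespace GluedBipartite

variable {α : Type*} (a₀ : α)

def graph : SimpleGraph (Fin 4 × (α ⊕ α)) := SimpleGraph.fromRel fun x y =>
  (x.1 = y.1 ∧ x.2.isLeft ∧ y.2.isRight) ∨
  (x.1 = 0 ∧ x.2 = Sum.inl a₀ ∧ x.1 ≠ y.1 ∧ y.2 = Sum.inl a₀)

def gate (j : Fin 4) : Fin 4 × (α ⊕ α) := (j, Sum.inl a₀)

variable {a₀}

theorem adj_iff {x y : Fin 4 × (α ⊕ α)} : (graph a₀).Adj x y ↔
    (x.1 = y.1 ∧ x.2.isLeft ≠ y.2.isLeft) ∨ (x = gate a₀ 0 ∧ y = gate a₀ y.1 ∧ y.1 ≠ 0) ∨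
      (y = gate a₀ 0 ∧ x = gate a₀ x.1 ∧ x.1 ≠ 0) := by
  obtain ⟨i, s⟩ := x
  obtain ⟨j, t⟩ := y
  rcases s with a | a <;> rcases t with b | b <;> simp [graph, gate] <;> grind

theorem adj_gate_zero_gate {j : Fin 4} (hj : j ≠ 0) : (graph a₀).Adj (gate a₀ 0) (gate a₀ j) :=
  adj_iff.2 (Or.inr (Or.inl ⟨rfl, rfl, hj⟩))

def blockHom (a₀ : α) (i : Fin 4) : completeBipartiteGraph α α →g graph a₀ where
  toFun := Prod.mk i
  map_rel' {s t} h :=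
    adj_iff.2 <| .inl ⟨rfl, by rcases s with _ | _ <;> rcases t with _ | _ <;> simp_all⟩

theorem blockHom_injective (i : Fin 4) : Function.Injective (blockHom a₀ i) :=
  Prod.mk_right_injective i

theorem fst_eq_of_mem_support_map_blockHom (i : Fin 4) {s t : α ⊕ α}
    {p : (completeBipartiteGraph α α).Walk s t} {y : Fin 4 × (α ⊕ α)}
    (hy : y ∈ (p.map (blockHom a₀ i)).support) : y.1 = i := by
  rw [Walk.support_map, List.mem_map] at hy
  obtain ⟨_, -, rfl⟩ := hy
  rfl

theorem hub_mem_support {x y : Fin 4 × (α ⊕ α)} (w : (graph a₀).Walk x y) (h : x.1 ≠ y.1) :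
    gate a₀ 0 ∈ w.support := by
  induction w with
  | nil => exact absurd rfl h
  | @cons x z y hxz w ih =>
    rcases adj_iff.1 hxz with ⟨hxz, -⟩ | ⟨rfl, -⟩ | ⟨rfl, -⟩
    · exact List.mem_cons_of_mem _ (ih (hxz ▸ h))
    · exact w.support.mem_cons_self
    · exact List.mem_cons_of_mem _ w.start_mem_support

theorem edges_eq_of_isPath_hub_gate {j : Fin 4} (hj : j ≠ 0)
    {q : (graph a₀).Walk (gate a₀ 0) (gate a₀ j)} (hq : q.IsPath) :
    q.edges = [s(gate a₀ 0, gate a₀ j)] := by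
  cases q with
  | nil => exact absurd rfl hj
  | @cons _ z _ h q =>
    rw [Walk.cons_isPath_iff] at hq
    rcases adj_iff.1 h with ⟨hz, -⟩ | ⟨-, hz, -⟩ | ⟨rfl, -⟩
    · exact absurd (hub_mem_support q (by simpa [← hz, gate] using hj.symm)) hq.2
    · by_cases hzj : z.1 = j
      · obtain rfl : z = gate a₀ j := hzj ▸ hz
        obtain rfl := Walk.eq_nil_iff_nil.2 (Walk.isPath_iff_nil.1 hq.1)
        rfl
      · exact absurd (hub_mem_support q (by simpa [gate] using hzj)) hq.2
    · exact absurd h (graph a₀).irrefl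

theorem edges_eq_of_isPath_gate_gate {i j : Fin 4} (hi : i ≠ 0) (hj : j ≠ 0) (hij : i ≠ j)
    {p : (graph a₀).Walk (gate a₀ i) (gate a₀ j)} (hp : p.IsPath) :
    p.edges = [s(gate a₀ 0, gate a₀ i), s(gate a₀ 0, gate a₀ j)] := by
  classical
  have hhub := hub_mem_support p hij
  have hleft := edges_eq_of_isPath_hub_gate hi (hp.takeUntil hhub).reverse
  rw [Walk.edges_reverse, List.reverse_eq_cons_iff] at hleft
  rw [← p.take_spec hhub, Walk.edges_append, hleft,
    edges_eq_of_isPath_hub_gate hj (hp.dropUntil hhub)]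
  rfl

theorem color_ne_of_isProperConnColoring {β : Type*} {c : Sym2 (Fin 4 × (α ⊕ α)) → β}
    (hc : IsProperConnColoring (graph a₀) c) {i j : Fin 4} (hi : i ≠ 0) (hj : j ≠ 0)
    (hij : i ≠ j) : c s(gate a₀ 0, gate a₀ i) ≠ c s(gate a₀ 0, gate a₀ j) := by
  obtain ⟨p, hp, hpc⟩ := hc (gate a₀ i) (gate a₀ j)
  rw [IsProperWalk, edges_eq_of_isPath_gate_gate hi hj hij hp] at hpc
  exact (List.isChain_cons_cons.1 hpc).1

theorem three_le_of_isProperConnColoring {k : ℕ} {c : Sym2 (Fin 4 × (α ⊕ α)) → Fin k}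
    (hc : IsProperConnColoring (graph a₀) c) : 3 ≤ k := by
  by_contra! hk
  obtain ⟨i, j, hij, heq⟩ := Fintype.exists_ne_map_eq_of_card_lt
    (fun i : Fin 3 => c s(gate a₀ 0, gate a₀ i.succ)) (by simpa using hk)
  exact color_ne_of_isProperConnColoring hc (Fin.succ_ne_zero i) (Fin.succ_ne_zero j)
    (Fin.succ_injective _ |>.ne hij) heq

section Coloring

variable [DecidableEq α]

def coloring : Sym2 (Fin 4 × (α ⊕ α)) → Fin 3 :=
  Sym2.lift ⟨fun x y =>
      if x.1 = y.1 then matchingColor s(x.2, y.2) else Fin.ofNat 3 (x.1 + y.1 : ℕ),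
    fun x y => by simp only [eq_comm (a := x.1), Sym2.eq_swap (a := x.2), Nat.add_comm (x.1 : ℕ)]⟩

theorem coloring_comp_map_blockHom (i : Fin 4) :
    coloring ∘ Sym2.map (blockHom a₀ i) = matchingColor := by
  funext e
  induction e using Sym2.ind
  simp [coloring, blockHom]

theorem coloring_gate_ne {i j : Fin 4} (hi : i ≠ 0) (hj : j ≠ 0) (hij : i ≠ j) :
    coloring s(gate a₀ 0, gate a₀ i) ≠ coloring s(gate a₀ 0, gate a₀ j) := by
  simp only [coloring, gate, Sym2.lift_mk, Ne.symm hi, Ne.symm hj, if_false]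
  revert i j
  decide

theorem isProperWalk_map_blockHom (i : Fin 4) {s t : α ⊕ α}
    {p : (completeBipartiteGraph α α).Walk s t} (hp : IsProperWalk matchingColor p) :
    IsProperWalk coloring (p.map (blockHom a₀ i)) := by
  rwa [isProperWalk_map_iff, coloring_comp_map_blockHom]

theorem exists_path_in_block (i : Fin 4) (s t : α ⊕ α) :
    ∃ p : (graph a₀).Walk (i, s) (i, t), p.IsPath ∧ IsProperWalk coloring p := by
  obtain ⟨q, hq, hqc⟩ := isProperConnColoring_matchingColor s t
  exact ⟨q.map (blockHom a₀ i), hq.map (blockHom_injective i), isProperWalk_map_blockHom i hqc⟩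

theorem exists_path_in_block_to_gate [Nontrivial α] (i : Fin 4) (s : α ⊕ α) (t : Fin 3) :
    ∃ p : (graph a₀).Walk (i, s) (gate a₀ i), p.IsPath ∧ IsProperWalk coloring p ∧
      (∀ y ∈ p.support, y.1 = i) ∧ ∀ e ∈ p.edges.getLast?, coloring e ≠ t := by
  obtain ⟨q, hq, hqc, hql⟩ := exists_isPath_to_inl_lastColor_ne a₀ s t
  have hlast : ∀ e ∈ (q.map (blockHom a₀ i)).edges.getLast?, coloring e ≠ t := by
    intro e he
    rw [Walk.edges_map, List.getLast?_map, Option.mem_map] at he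
    obtain ⟨e, he, rfl⟩ := he
    exact (congrFun (coloring_comp_map_blockHom i) e).trans_ne (hql e he)
  exact ⟨q.map (blockHom a₀ i), hq.map (blockHom_injective i), isProperWalk_map_blockHom i hqc,
    fun y => fst_eq_of_mem_support_map_blockHom i, hlast⟩

theorem exists_path_to_hub_of_fst_ne_zero [Nontrivial α] {j : Fin 4} (hj : j ≠ 0) (s : α ⊕ α) :
    ∃ p : (graph a₀).Walk (j, s) (gate a₀ 0), p.IsPath ∧ IsProperWalk coloring p ∧
      (∀ y ∈ p.support, y.1 = j ∨ y = gate a₀ 0) ∧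
      p.edges.getLast? = some s(gate a₀ 0, gate a₀ j) := by
  obtain ⟨q, hq, hqc, hqs, hql⟩ := exists_path_in_block_to_gate (a₀ := a₀) j s
    (coloring s(gate a₀ 0, gate a₀ j))
  have hbridge := (adj_gate_zero_gate (a₀ := a₀) hj).symm
  refine ⟨q.concat hbridge, hq.concat (fun h => hj (hqs _ h).symm) hbridge, ?_, ?_, ?_⟩
  · rw [Walk.concat_eq_append]
    refine hqc.append (by simp [isProperWalk_iff_isChain]) ?_
    simpa [Sym2.eq_swap] using hql
  · simp only [Walk.support_concat, List.mem_append, List.mem_singleton]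
    rintro y (hy | rfl)
    · exact .inl (hqs y hy)
    · exact .inr rfl
  · rw [Walk.edges_concat, List.concat_eq_append, List.getLast?_append_of_ne_nil _ (by simp)]
    exact congrArg some Sym2.eq_swap

theorem exists_path_of_fst_ne [Nontrivial α] {x y : Fin 4 × (α ⊕ α)} (hx : x.1 ≠ 0)
    (hxy : x.1 ≠ y.1) : ∃ p : (graph a₀).Walk x y, p.IsPath ∧ IsProperWalk coloring p := by
  obtain ⟨i, s⟩ := x
  obtain ⟨j, t⟩ := y
  obtain ⟨p, hp, hpc, hps, hpl⟩ := exists_path_to_hub_of_fst_ne_zero (a₀ := a₀) hx s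
  by_cases hj : j = 0
  · subst hj
    obtain ⟨q, hq, hqc, hqs, hql⟩ := exists_path_in_block_to_gate (a₀ := a₀) 0 t
      (coloring s(gate a₀ 0, gate a₀ i))
    refine exists_isPath_isProperWalk_of_meet hp hq hpc hqc (fun z hzp hzq => ?_) ?_
    · exact (hps z hzp).resolve_left ((hqs z hzq).symm ▸ Ne.symm hx)
    · simp only [hpl, Option.mem_some_iff]
      rintro e rfl f hf
      exact (hql f hf).symm
  · obtain ⟨q, hq, hqc, hqs, hql⟩ := exists_path_to_hub_of_fst_ne_zero (a₀ := a₀) hj t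
    refine exists_isPath_isProperWalk_of_meet hp hq hpc hqc (fun z hzp hzq => ?_) ?_
    · refine (hps z hzp).resolve_left fun hz => (hqs z hzq).elim (fun hz' => ?_) fun hz' => ?_
      · exact hxy (hz.symm.trans hz')
      · exact hx (hz.symm.trans (congrArg Prod.fst hz'))
    · simp only [hpl, hql, Option.mem_some_iff]
      rintro e rfl f rfl
      exact coloring_gate_ne hx hj hxy

theorem isProperConnColoring_coloring [Nontrivial α] :
    IsProperConnColoring (graph a₀) coloring := by
  intro x y
  by_cases hxy : x.1 = y.1
  · obtain ⟨i, s⟩ := x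
    obtain ⟨j, t⟩ := y
    obtain rfl : i = j := hxy
    exact exists_path_in_block i s t
  by_cases hx : x.1 = 0
  · obtain ⟨p, hp, hpc⟩ := exists_path_of_fst_ne (a₀ := a₀) (hx ▸ Ne.symm hxy) (Ne.symm hxy)
    exact ⟨p.reverse, hp.reverse, hpc.reverse⟩
  · exact exists_path_of_fst_ne hx hxy

theorem pc_eq_three [Nontrivial α] : pc (graph a₀) = 3 := by
  have h3 : 3 ∈ {k | ∃ c : Sym2 (Fin 4 × (α ⊕ α)) → Fin k, IsProperConnColoring (graph a₀) c} :=
    ⟨coloring, isProperConnColoring_coloring⟩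
  exact le_antisymm (Nat.sInf_le h3)
    (le_csInf ⟨3, h3⟩ fun _ ⟨_, hc⟩ => three_le_of_isProperConnColoring hc)

end Coloring

theorem colorable_two : (graph a₀).Colorable 2 := by
  let f : Fin 4 × (α ⊕ α) → Bool := fun x => xor (decide (x.1 = 0)) x.2.isLeft
  have hf : ∀ {x y}, (graph a₀).Adj x y → f x ≠ f y := by
    intro x y h
    rcases adj_iff.1 h with ⟨hxy, hs⟩ | ⟨rfl, hy', hy⟩ | ⟨rfl, hx', hx⟩
    · simpa [f, hxy] using hs
    · rw [hy']; simp [f, gate, hy]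
    · rw [hx']; simp [f, gate, hx]
  simpa using (Coloring.mk f hf).colorable

theorem card_le_ncard_neighborSet [Finite α] (x : Fin 4 × (α ⊕ α)) :
    Nat.card α ≤ ((graph a₀).neighborSet x).ncard := by
  obtain ⟨i, a | a⟩ := x
  · rw [← Set.ncard_range_of_injective ((Prod.mk_right_injective i).comp Sum.inr_injective)]
    exact Set.ncard_le_ncard (by rintro _ ⟨b, rfl⟩; exact adj_iff.2 (.inl ⟨rfl, by simp⟩))
  · rw [← Set.ncard_range_of_injective ((Prod.mk_right_injective i).comp Sum.inl_injective)]
    exact Set.ncard_le_ncard (by rintro _ ⟨b, rfl⟩; exact adj_iff.2 (.inl ⟨rfl, by simp⟩))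

theorem ncard_neighborSet_inr (i : Fin 4) (b : α) :
    ((graph a₀).neighborSet (i, .inr b)).ncard = Nat.card α := by
  have : (graph a₀).neighborSet (i, .inr b) = Set.range fun a => (i, Sum.inl a) := by
    ext ⟨j, a | a⟩ <;> simp [adj_iff, gate, eq_comm]
  rw [this, Set.ncard_range_of_injective (by intro b b' h; simpa using h)]

end GluedBipartite

theorem stmt_19 (m : ℕ) (hm : 2 ≤ m) :
    ∀ G : SimpleGraph (Fin 4 × (Fin m ⊕ Fin m)),
      G = SimpleGraph.fromRel (fun x y =>
        (x.1 = y.1 ∧ x.2.isLeft ∧ y.2.isRight) ∨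
        (x.1 = 0 ∧ x.2 = Sum.inl (⟨0, by omega⟩ : Fin m) ∧ x.1 ≠ y.1 ∧
          y.2 = Sum.inl (⟨0, by omega⟩ : Fin m))) →
      Fintype.card (Fin 4 × (Fin m ⊕ Fin m)) = 8 * m ∧
      G.Connected ∧ G.Colorable 2 ∧
      (∀ x, m ≤ (G.neighborSet x).ncard) ∧
      (∃ x, (G.neighborSet x).ncard = m) ∧
      pc G = 3 := by
  rintro G rfl
  have : Nontrivial (Fin m) := Fin.nontrivial_iff_two_le.2 hm
  let a₀ : Fin m := ⟨0, by omega⟩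
  refine ⟨by simp only [Fintype.card_prod, Fintype.card_sum, Fintype.card_fin]; ring,
    (GluedBipartite.isProperConnColoring_coloring (a₀ := a₀)).connected,
    GluedBipartite.colorable_two, fun x => ?_, ⟨(0, .inr a₀), ?_⟩, GluedBipartite.pc_eq_three⟩
  · have := GluedBipartite.card_le_ncard_neighborSet (a₀ := a₀) x
    rwa [Nat.card_fin] at this
  · have := GluedBipartite.ncard_neighborSet_inr (a₀ := a₀) 0 a₀
    rwa [Nat.card_fin] at this
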